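/- arXiv:2102.10756 — 3 statements merged into one kernel-verified Lean document; each statement's English description precedes it below -/
import Mathlib

section
/- Let c₁,…,c_N be symmetric n×n matrices with ⟨θ, cᵢθ⟩ ≥ γ|θ|² for all θ ∈ ℝⁿ, let 𝔠 be a symmetric positive semidefinite n×n matrix with ‖𝔠 − cᵢ‖ ≤ a for all i (operator norm), and let δ ∈ [0,1). Then for any x¹,…,xᴺ ∈ ℝⁿ, (δN/(1−δ))⟨m(c·x), m(x)⟩ + ∑ᵢ⟨cᵢ xⁱ, xⁱ⟩ ≥ (γ − δa/(1−δ)) ∑ᵢ |xⁱ|², where m(c·x) = (1/N)∑ᵢ cᵢxⁱ and m(x) = (1/N)∑ᵢ xⁱ. -/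
/-!
Write `S = ∑ xⁱ`. Since `cᵢ = 𝔠 - (𝔠 - cᵢ)` and all matrices are symmetric,
`⟨∑ cᵢxⁱ, S⟩ = ⟨S, 𝔠S⟩ - ∑ ⟨xⁱ, (𝔠 - cᵢ)S⟩`, and the first term is nonnegative.
By polarization the quadratic-form bound on `𝔠 - cᵢ` gives
`|⟨u, (𝔠 - cᵢ)v⟩| ≤ (a/2)(|u|² + |v|²)`; taking `u = N xⁱ`, `v = S` and using
`|S|² ≤ N ∑ |xⁱ|²` yields `⟨∑ cᵢxⁱ, S⟩ ≥ -aN ∑ |xⁱ|²`, which is the mean-field term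
up to the factor `N²`. The diagonal term is at least `γ ∑ |xⁱ|²` by coercivity.
-/

open Matrix BigOperators

namespace Matrix

variable {m ι : Type*} [Fintype m] [Fintype ι]

theorem IsSymm.dotProduct_mulVec_comm {M : Matrix m m ℝ} (hM : M.IsSymm) (u v : m → ℝ) :
    u ⬝ᵥ M *ᵥ v = v ⬝ᵥ M *ᵥ u := by
  rw [← dotProduct_transpose_mulVec, hM.eq]

theorem IsSymm.abs_dotProduct_mulVec_le {M : Matrix m m ℝ} (hM : M.IsSymm) {a : ℝ}
    (hM_le : ∀ θ, |θ ⬝ᵥ M *ᵥ θ| ≤ a * (θ ⬝ᵥ θ)) (u v : m → ℝ) :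
    |u ⬝ᵥ M *ᵥ v| ≤ a / 2 * (u ⬝ᵥ u + v ⬝ᵥ v) := by
  have hpolar : 4 * (u ⬝ᵥ M *ᵥ v) = (u + v) ⬝ᵥ M *ᵥ (u + v) - (u - v) ⬝ᵥ M *ᵥ (u - v) := by
    simp only [mulVec_add, mulVec_sub, add_dotProduct, sub_dotProduct, dotProduct_add,
      dotProduct_sub, hM.dotProduct_mulVec_comm v u]
    ring
  have hparallelogram : (u + v) ⬝ᵥ (u + v) + (u - v) ⬝ᵥ (u - v) = 2 * (u ⬝ᵥ u + v ⬝ᵥ v) := by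
    simp only [add_dotProduct, sub_dotProduct, dotProduct_add, dotProduct_sub, dotProduct_comm v u]
    ring
  have := abs_sub ((u + v) ⬝ᵥ M *ᵥ (u + v)) ((u - v) ⬝ᵥ M *ᵥ (u - v))
  rw [← hpolar, abs_mul, abs_of_pos four_pos] at this
  linarith [hM_le (u + v), hM_le (u - v), congrArg (a * ·) hparallelogram]

theorem sum_dotProduct_sum_le_card_mul (x : ι → m → ℝ) :
    (∑ i, x i) ⬝ᵥ (∑ i, x i) ≤ Fintype.card ι * ∑ i, x i ⬝ᵥ x i := by
  simp only [dotProduct, Finset.sum_apply, ← sq]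
  rw [Finset.sum_comm, Finset.mul_sum]
  exact Finset.sum_le_sum fun k _ => sq_sum_le_card_mul_sum_sq

theorem sum_dotProduct_mulVec_sum_le [Nonempty ι] {a : ℝ} (ha : 0 ≤ a) (M : ι → Matrix m m ℝ)
    (hM : ∀ i, (M i).IsSymm) (hM_le : ∀ i θ, |θ ⬝ᵥ M i *ᵥ θ| ≤ a * (θ ⬝ᵥ θ)) (x : ι → m → ℝ) :
    ∑ i, x i ⬝ᵥ M i *ᵥ ∑ j, x j ≤ a * Fintype.card ι * ∑ i, x i ⬝ᵥ x i := by
  set S := ∑ j, x j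
  set T := ∑ i, x i ⬝ᵥ x i
  set N : ℝ := (Fintype.card ι : ℝ)
  have hN : 0 < N := by simp [N, Fintype.card_pos]
  have hterm : ∀ i, N * (x i ⬝ᵥ M i *ᵥ S) ≤ a / 2 * (N ^ 2 * (x i ⬝ᵥ x i) + S ⬝ᵥ S) := by
    intro i
    have := le_of_abs_le ((hM i).abs_dotProduct_mulVec_le (hM_le i) (N • x i) S)
    simpa only [smul_dotProduct, dotProduct_smul, smul_eq_mul, ← mul_assoc, ← sq] using this
  have hsum : N * ∑ i, x i ⬝ᵥ M i *ᵥ S ≤ a / 2 * (N ^ 2 * T + N * (S ⬝ᵥ S)) := by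
    calc N * ∑ i, x i ⬝ᵥ M i *ᵥ S
        ≤ ∑ i, a / 2 * (N ^ 2 * (x i ⬝ᵥ x i) + S ⬝ᵥ S) := by
          rw [Finset.mul_sum]; exact Finset.sum_le_sum fun i _ => hterm i
      _ = a / 2 * (N ^ 2 * T + N * (S ⬝ᵥ S)) := by
          rw [← Finset.mul_sum, Finset.sum_add_distrib, ← Finset.mul_sum, Finset.sum_const,
            Finset.card_univ, nsmul_eq_mul]
  have hS : S ⬝ᵥ S ≤ N * T := sum_dotProduct_sum_le_card_mul x
  have : N * ∑ i, x i ⬝ᵥ M i *ᵥ S ≤ N * (a * N * T) := by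
    linarith [mul_le_mul_of_nonneg_left hS (mul_nonneg ha hN.le)]
  exact le_of_mul_le_mul_left this hN

theorem neg_mul_card_mul_le_sum_mulVec_dotProduct_sum [Nonempty ι] {a : ℝ} (ha : 0 ≤ a)
    (c : ι → Matrix m m ℝ) (hc : ∀ i, (c i).IsSymm) (𝔠 : Matrix m m ℝ) (h𝔠 : 𝔠.IsSymm)
    (h𝔠_psd : 𝔠.PosSemidef) (hdist : ∀ i θ, |θ ⬝ᵥ (𝔠 - c i) *ᵥ θ| ≤ a * (θ ⬝ᵥ θ))
    (x : ι → m → ℝ) :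
    -(a * Fintype.card ι * ∑ i, x i ⬝ᵥ x i) ≤ (∑ i, c i *ᵥ x i) ⬝ᵥ ∑ i, x i := by
  set S := ∑ i, x i
  have hsplit : (∑ i, c i *ᵥ x i) ⬝ᵥ S = S ⬝ᵥ 𝔠 *ᵥ S - ∑ i, x i ⬝ᵥ (𝔠 - c i) *ᵥ S := by
    simp only [S, sum_dotProduct, sub_mulVec, dotProduct_sub, Finset.sum_sub_distrib,
      sub_sub_cancel]
    exact Finset.sum_congr rfl fun i _ => by rw [dotProduct_comm, (hc i).dotProduct_mulVec_comm]
  have h𝔠S : 0 ≤ S ⬝ᵥ 𝔠 *ᵥ S := by simpa using h𝔠_psd.dotProduct_mulVec_nonneg S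
  have := sum_dotProduct_mulVec_sum_le ha _ (fun i => h𝔠.sub (hc i)) hdist x
  linarith

end Matrix

-- `hdist` is `‖𝔠 - cᵢ‖ ≤ a`: for a symmetric matrix the operator norm is the supremum of the
-- quadratic form `|⟨θ, Mθ⟩|` over unit vectors.
theorem terminal_monotonicity_general {n N : ℕ} (hN : 0 < N) (γ a δ : ℝ)
    (ha : 0 ≤ a) (hδ : δ ∈ Set.Ico (0 : ℝ) 1)
    (c : Fin N → Matrix (Fin n) (Fin n) ℝ) (hcsymm : ∀ i, (c i).IsSymm)
    (hclow : ∀ i, ∀ θ : Fin n → ℝ, γ * (θ ⬝ᵥ θ) ≤ θ ⬝ᵥ (c i).mulVec θ)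
    (𝔠 : Matrix (Fin n) (Fin n) ℝ) (h𝔠symm : 𝔠.IsSymm) (h𝔠psd : 𝔠.PosSemidef)
    (hdist : ∀ i, ∀ θ : Fin n → ℝ, |θ ⬝ᵥ (𝔠 - c i).mulVec θ| ≤ a * (θ ⬝ᵥ θ))
    (x : Fin N → (Fin n → ℝ)) :
    (γ - δ * a / (1 - δ)) * ∑ i, (x i) ⬝ᵥ (x i)
      ≤ (δ * N / (1 - δ)) *
          (((N : ℝ)⁻¹ • ∑ i, (c i).mulVec (x i)) ⬝ᵥ ((N : ℝ)⁻¹ • ∑ i, x i))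
        + ∑ i, (c i).mulVec (x i) ⬝ᵥ x i := by
  have : Nonempty (Fin N) := Fin.pos_iff_nonempty.mp hN
  obtain ⟨hδ0, hδ1⟩ := hδ
  have hNpos : (0 : ℝ) < N := by exact_mod_cast hN
  have hcross := neg_mul_card_mul_le_sum_mulVec_dotProduct_sum ha c hcsymm 𝔠 h𝔠symm h𝔠psd hdist x
  rw [Fintype.card_fin] at hcross
  have hdiag : γ * ∑ i, x i ⬝ᵥ x i ≤ ∑ i, (c i).mulVec (x i) ⬝ᵥ x i := by
    rw [Finset.mul_sum]
    exact Finset.sum_le_sum fun i _ => (hclow i (x i)).trans_eq (dotProduct_comm _ _)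
  have hmean : -(δ * a / (1 - δ) * ∑ i, x i ⬝ᵥ x i) ≤ (δ * N / (1 - δ)) *
      (((N : ℝ)⁻¹ • ∑ i, (c i).mulVec (x i)) ⬝ᵥ ((N : ℝ)⁻¹ • ∑ i, x i)) := by
    have hcoef : 0 ≤ δ / (1 - δ) / N := div_nonneg (div_nonneg hδ0 (sub_nonneg.2 hδ1.le)) hNpos.le
    calc -(δ * a / (1 - δ) * ∑ i, x i ⬝ᵥ x i)
        = δ / (1 - δ) / N * -(a * N * ∑ i, x i ⬝ᵥ x i) := by field_simp
      _ ≤ δ / (1 - δ) / N * ((∑ i, (c i).mulVec (x i)) ⬝ᵥ ∑ i, x i) := by gcongr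
      _ = _ := by rw [smul_dotProduct, dotProduct_smul, smul_eq_mul, smul_eq_mul]; field_simp
  linarith

/-- Terminal monotonicity estimate: for symmetric matrices `cᵢ ⪰ γ I`, a positive
semidefinite symmetric matrix `𝔠` with `‖𝔠 − cᵢ‖ ≤ a` (operator norm, expressed via the
quadratic form since all matrices are symmetric), and `δ ∈ [0,1)`,
`(δN/(1−δ))⟨m(c·x), m(x)⟩ + ∑ᵢ⟨cᵢxⁱ, xⁱ⟩ ≥ (γ − δa/(1−δ))∑ᵢ|xⁱ|²`. -/
theorem terminal_monotonicity {n N : ℕ} (hN : 0 < N) (γ a δ : ℝ)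
    (hγ : 0 < γ) (ha : 0 ≤ a) (hδ : δ ∈ Set.Ico (0 : ℝ) 1)
    (c : Fin N → Matrix (Fin n) (Fin n) ℝ) (hcsymm : ∀ i, (c i).IsSymm)
    (hclow : ∀ i, ∀ θ : Fin n → ℝ, γ * (θ ⬝ᵥ θ) ≤ θ ⬝ᵥ (c i).mulVec θ)
    (𝔠 : Matrix (Fin n) (Fin n) ℝ) (h𝔠symm : 𝔠.IsSymm) (h𝔠psd : 𝔠.PosSemidef)
    (hdist : ∀ i, ∀ θ : Fin n → ℝ, |θ ⬝ᵥ (𝔠 - c i).mulVec θ| ≤ a * (θ ⬝ᵥ θ))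
    (x : Fin N → (Fin n → ℝ)) :
    (γ - δ * a / (1 - δ)) * ∑ i, (x i) ⬝ᵥ (x i)
      ≤ (δ * N / (1 - δ)) *
          (((N : ℝ)⁻¹ • ∑ i, (c i).mulVec (x i)) ⬝ᵥ ((N : ℝ)⁻¹ • ∑ i, x i))
        + ∑ i, (c i).mulVec (x i) ⬝ᵥ x i :=
  terminal_monotonicity_general hN γ a δ ha hδ c hcsymm hclow 𝔠 h𝔠symm h𝔠psd hdist x
end

section
/- Let G be a sub-σ-algebra, V a G-measurable random symmetric positive definite n×n matrix, p⁰ a G-measurable square-integrable ℝⁿ-valued random variable, and y, p square-integrable ℝⁿ-valued random variables. Then E[⟨V(−Δp⁰ + E[Δy|G] + E[Δp|G]), −Δp⁰ + Δy + Δp⟩ | G] = ⟨V(−Δp⁰ + E[Δy|G] + E[Δp|G]), −Δp⁰ + E[Δy|G] + E[Δp|G]⟩ ≥ 0 almost surely, for any differences Δp⁰ (G-measurable, square-integrable) and Δy, Δp (square-integrable). -/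
/-!
Write `u = -Δp⁰ + E[Δy|G] + E[Δp|G]` and `x = -Δp⁰ + Δy + Δp`. Since `Δp⁰` is `G`-measurable,
`E[x|G] = u`; and `V u` is `G`-measurable and square integrable (`V` is bounded), so it can be
pulled out of the conditional expectation of the integrable product `⟨V u, x⟩`, leaving
`⟨V u, E[x|G]⟩ = ⟨V u, u⟩`, which is nonnegative because `V` is positive definite.
-/

open Matrix MeasureTheory

namespace Matrix

variable {l n α : Type*} [Fintype l] [Fintype n]

theorem norm_mulVec_le_of_norm_le [SeminormedRing α] {A : Matrix l n α} {C : ℝ} (hC : 0 ≤ C)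
    (hA : ∀ i j, ‖A i j‖ ≤ C) (v : n → α) : ‖A *ᵥ v‖ ≤ Fintype.card n * C * ‖v‖ := by
  refine (pi_norm_le_iff_of_nonneg (by positivity)).mpr fun i => ?_
  calc ‖∑ j, A i j * v j‖ ≤ ∑ j, ‖A i j‖ * ‖v j‖ :=
        (norm_sum_le _ _).trans (Finset.sum_le_sum fun j _ => norm_mul_le _ _)
    _ ≤ ∑ _j : n, C * ‖v‖ :=
        Finset.sum_le_sum fun j _ => mul_le_mul (hA i j) (norm_le_pi_norm v j) (norm_nonneg _) hC
    _ = Fintype.card n * C * ‖v‖ := by simp [mul_assoc]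

noncomputable def dotProductCLM (n : Type*) [Fintype n] : (n → ℝ) →L[ℝ] (n → ℝ) →L[ℝ] ℝ :=
  (dotProductBilin ℝ ℝ).toContinuousBilinearMap

end Matrix

namespace MeasureTheory

variable {Ω l n : Type*} [Fintype l] [Fintype n] {m mΩ : MeasurableSpace Ω} {μ : Measure Ω}
  {p q : ENNReal}

theorem MemLp.matrix_mulVec {A : Ω → Matrix l n ℝ} {v : Ω → n → ℝ}
    (hA : AEStronglyMeasurable A μ) {C : ℝ} (hA_bd : ∀ ω i j, ‖A ω i j‖ ≤ C) (hv : MemLp v p μ) :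
    MemLp (fun ω => A ω *ᵥ v ω) p μ :=
  hv.of_le_mul (c := Fintype.card n * max C 0)
    ((Continuous.matrix_mulVec continuous_fst continuous_snd).comp_aestronglyMeasurable₂ hA hv.1)
    (ae_of_all _ fun ω => norm_mulVec_le_of_norm_le (le_max_right C 0)
      (fun i j => (hA_bd ω i j).trans (le_max_left C 0)) (v ω))

theorem MemLp.integrable_dotProduct {v w : Ω → n → ℝ} (hv : MemLp v p μ) (hw : MemLp w q μ)
    [ENNReal.HolderTriple p q 1] : Integrable (fun ω => v ω ⬝ᵥ w ω) μ :=
  memLp_one_iff_integrable.mp <| hv.of_bilin (fun a b => dotProductCLM n a b) ‖dotProductCLM n‖₊ hw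
    ((dotProductCLM n).continuous₂.comp_aestronglyMeasurable₂ hv.1 hw.1)
    (ae_of_all _ fun ω => by
      simpa only [← NNReal.coe_le_coe, NNReal.coe_mul, coe_nnnorm]
        using (dotProductCLM n).le_opNorm₂ (v ω) (w ω))

theorem condExp_dotProduct_of_stronglyMeasurable_left {v w : Ω → n → ℝ}
    (hv : StronglyMeasurable[m] v) (hvw : Integrable (fun ω => v ω ⬝ᵥ w ω) μ)
    (hw : Integrable w μ) :
    μ[fun ω => v ω ⬝ᵥ w ω|m] =ᵐ[μ] fun ω => v ω ⬝ᵥ (μ[w|m]) ω :=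
  condExp_bilin_of_stronglyMeasurable_left (dotProductCLM n) hv hvw hw

end MeasureTheory

theorem conditional_monotonicity_cancellation_general {n : ℕ} {Ω : Type*}
    {mΩ : MeasurableSpace Ω} (μ : Measure Ω) [IsProbabilityMeasure μ]
    (G : MeasurableSpace Ω) (hG : G ≤ mΩ)
    (V : Ω → Matrix (Fin n) (Fin n) ℝ)
    (hV_meas : ∀ i j, Measurable[G] fun ω => V ω i j)
    (hV_bd : ∃ C : ℝ, ∀ ω i j, |V ω i j| ≤ C)
    (hV_pos : ∀ ω, (V ω).PosDef)
    (Δp0 Δy Δp : Ω → (Fin n → ℝ))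
    (hp0_meas : StronglyMeasurable[G] Δp0)
    (hp0 : MemLp Δp0 2 μ) (hy : MemLp Δy 2 μ) (hp : MemLp Δp 2 μ) :
    ((μ[fun ω => (V ω).mulVec (-Δp0 ω + (μ[Δy|G]) ω + (μ[Δp|G]) ω)
          ⬝ᵥ (-Δp0 ω + Δy ω + Δp ω)|G])
        =ᵐ[μ] fun ω => (V ω).mulVec (-Δp0 ω + (μ[Δy|G]) ω + (μ[Δp|G]) ω)
          ⬝ᵥ (-Δp0 ω + (μ[Δy|G]) ω + (μ[Δp|G]) ω)) ∧
    (∀ᵐ ω ∂μ, 0 ≤ (V ω).mulVec (-Δp0 ω + (μ[Δy|G]) ω + (μ[Δp|G]) ω)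
          ⬝ᵥ (-Δp0 ω + (μ[Δy|G]) ω + (μ[Δp|G]) ω)) := by
  obtain ⟨C, hC⟩ := hV_bd
  set u := fun ω => -Δp0 ω + (μ[Δy|G]) ω + (μ[Δp|G]) ω
  set x := fun ω => -Δp0 ω + Δy ω + Δp ω
  have hV : StronglyMeasurable[G] V :=
    (measurable_pi_iff.mpr fun i => measurable_pi_iff.mpr (hV_meas i)).stronglyMeasurable
  have hu_meas : StronglyMeasurable[G] u :=
    (hp0_meas.neg.add stronglyMeasurable_condExp).add stronglyMeasurable_condExp
  have hVu : MemLp (fun ω => V ω *ᵥ u ω) 2 μ :=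
    ((hp0.neg.add (hy.condExp one_le_two)).add (hp.condExp one_le_two)).matrix_mulVec
      (hV.mono hG).aestronglyMeasurable hC
  have hx : MemLp x 2 μ := (hp0.neg.add hy).add hp
  have hx_condExp : μ[x|G] =ᵐ[μ] u := by
    have := isFiniteMeasure_trim (μ := μ) hG
    have hp0_int := hp0.integrable one_le_two
    have hy_int := hy.integrable one_le_two
    calc μ[-Δp0 + Δy + Δp|G]
        =ᵐ[μ] μ[-Δp0 + Δy|G] + μ[Δp|G] :=
          condExp_add (hp0_int.neg.add hy_int) (hp.integrable one_le_two) G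
      _ =ᵐ[μ] μ[-Δp0|G] + μ[Δy|G] + μ[Δp|G] :=
          (condExp_add hp0_int.neg hy_int G).add Filter.EventuallyEq.rfl
      _ = u := by rw [condExp_of_stronglyMeasurable hG hp0_meas.neg hp0_int.neg]; rfl
  refine ⟨?_, ae_of_all _ fun ω => ?_⟩
  · filter_upwards [condExp_dotProduct_of_stronglyMeasurable_left
      ((Continuous.matrix_mulVec continuous_fst continuous_snd).comp_stronglyMeasurable
        (hV.prodMk hu_meas))
      (hVu.integrable_dotProduct hx) (hx.integrable one_le_two), hx_condExp] with ω h_pull h_x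
    rw [h_pull, h_x]
  · rw [dotProduct_comm]
    exact (hV_pos ω).posSemidef.dotProduct_mulVec_nonneg _

/-- Conditional-expectation version of the monotonicity cancellation: with a
`G`-measurable random symmetric positive definite matrix `V` and `G`-measurable `Δp⁰`,
`E[⟨V(−Δp⁰ + E[Δy|G] + E[Δp|G]), −Δp⁰ + Δy + Δp⟩ | G]
  = ⟨V(−Δp⁰ + E[Δy|G] + E[Δp|G]), −Δp⁰ + E[Δy|G] + E[Δp|G]⟩ ≥ 0` a.s. -/
theorem conditional_monotonicity_cancellation {n : ℕ} {Ω : Type*}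
    {mΩ : MeasurableSpace Ω} (μ : Measure Ω) [IsProbabilityMeasure μ]
    (G : MeasurableSpace Ω) (hG : G ≤ mΩ)
    (V : Ω → Matrix (Fin n) (Fin n) ℝ)
    (hV_meas : ∀ i j, Measurable[G] fun ω => V ω i j)
    (hV_bd : ∃ C : ℝ, ∀ ω i j, |V ω i j| ≤ C)
    (hV_symm : ∀ ω, (V ω).IsSymm) (hV_pos : ∀ ω, (V ω).PosDef)
    (Δp0 Δy Δp : Ω → (Fin n → ℝ))
    (hp0_meas : StronglyMeasurable[G] Δp0)
    (hp0 : MemLp Δp0 2 μ) (hy : MemLp Δy 2 μ) (hp : MemLp Δp 2 μ) :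
    ((μ[fun ω => (V ω).mulVec (-Δp0 ω + (μ[Δy|G]) ω + (μ[Δp|G]) ω)
          ⬝ᵥ (-Δp0 ω + Δy ω + Δp ω)|G])
        =ᵐ[μ] fun ω => (V ω).mulVec (-Δp0 ω + (μ[Δy|G]) ω + (μ[Δp|G]) ω)
          ⬝ᵥ (-Δp0 ω + (μ[Δy|G]) ω + (μ[Δp|G]) ω)) ∧
    (∀ᵐ ω ∂μ, 0 ≤ (V ω).mulVec (-Δp0 ω + (μ[Δy|G]) ω + (μ[Δp|G]) ω)
          ⬝ᵥ (-Δp0 ω + (μ[Δy|G]) ω + (μ[Δp|G]) ω)) :=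
  conditional_monotonicity_cancellation_general μ G hG V hV_meas hV_bd hV_pos Δp0 Δy Δp hp0_meas hp0
    hy hp
end

section
/- Let c be an n×n matrix-valued bounded random variable with ⟨θ, cθ⟩ ≥ γ|θ|² a.s. for all θ ∈ ℝⁿ, let 𝔠 be a G-measurable positive semidefinite symmetric matrix-valued random variable with ‖𝔠 − c‖_∞ ≤ a, and let δ ∈ [0,1) with 𝔞 := δa/(1−δ) < γ. Then for any square-integrable ℝⁿ-valued random variable Δx, E[⟨(δ/(1−δ))E[cΔx|G] + cΔx, Δx⟩ | G] ≥ (γ − 𝔞) E[|Δx|² | G] almost surely. -/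
open Matrix MeasureTheory

section Helpers

variable {Ω : Type*} {G mΩ : MeasurableSpace Ω} {μ : Measure Ω}

lemma integrable_mul_of_memL2 {f g : Ω → ℝ} (hf : MemLp f 2 μ) (hg : MemLp g 2 μ) :
    Integrable (fun ω => f ω * g ω) μ := by
  refine Integrable.mono' ((hf.integrable_sq.add hg.integrable_sq).const_mul (1/2))
    (hf.aestronglyMeasurable.mul hg.aestronglyMeasurable) ?_
  filter_upwards with ω
  simp only [Pi.add_apply]
  rw [Real.norm_eq_abs, abs_mul]
  nlinarith [sq_nonneg (|f ω| - |g ω|), abs_nonneg (f ω), abs_nonneg (g ω),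
    sq_abs (f ω), sq_abs (g ω)]

lemma memℒp_condexp_two [IsProbabilityMeasure μ] (hG : G ≤ mΩ)
    {f : Ω → ℝ} (hf : MemLp f 2 μ) : MemLp (μ[f|G]) 2 μ := by
  haveI : SigmaFinite (μ.trim hG) := inferInstance
  set fL : Lp ℝ 2 μ := hf.toLp f with hfL
  have hmain : (condExpL2 ℝ ℝ hG fL : Ω → ℝ) =ᵐ[μ] μ[f|G] := by
    refine ae_eq_condExp_of_forall_setIntegral_eq hG (hf.integrable one_le_two)
      (fun s _ _ => integrableOn_condExpL2_of_measure_ne_top hG (measure_ne_top μ s) fL)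
      (fun s hs hμs => ?_)
      (aestronglyMeasurable_condExpL2 hG fL)
    rw [integral_condExpL2_eq hG fL hs (measure_ne_top μ s)]
    exact setIntegral_congr_ae (hG s hs) ((hf.coeFn_toLp).mono fun ω h _ => h)
  exact (Lp.memLp _).ae_eq hmain

lemma condexp_pi_apply [IsProbabilityMeasure μ] {n : ℕ} (hG : G ≤ mΩ)
    {F : Ω → (Fin n → ℝ)} (hF : Integrable F μ) (i : Fin n) :
    (fun ω => (μ[F|G]) ω i) =ᵐ[μ] μ[fun ω => F ω i|G] := by
  haveI : SigmaFinite (μ.trim hG) := inferInstance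
  set L : (Fin n → ℝ) →L[ℝ] ℝ := ContinuousLinearMap.proj i with hL
  have hFi : Integrable (fun ω => F ω i) μ := L.integrable_comp hF
  refine ae_eq_condExp_of_forall_setIntegral_eq hG hFi
    (fun s _ _ => (L.integrable_comp (integrable_condExp (f := F))).integrableOn)
    (fun s hs hμs => ?_) ?_
  · have h1 : ∫ ω in s, (μ[F|G]) ω i ∂μ = L (∫ ω in s, (μ[F|G]) ω ∂μ) :=
      L.integral_comp_comm integrable_condExp.integrableOn
    have h2 : ∫ ω in s, F ω i ∂μ = L (∫ ω in s, F ω ∂μ) :=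
      L.integral_comp_comm hF.integrableOn
    rw [h1, h2, setIntegral_condExp hG hF hs]
  · exact ((continuous_apply i).comp_stronglyMeasurable
      (stronglyMeasurable_condExp (f := F))).aestronglyMeasurable

lemma integrable_pi_of_integrable {n : ℕ} {F : Ω → (Fin n → ℝ)}
    (h : ∀ i, Integrable (fun ω => F ω i) μ) : Integrable F μ := by
  have heq : F = fun ω => ∑ i : Fin n, (F ω i) • (Pi.single i 1 : Fin n → ℝ) := by
    funext ω j
    simp [Finset.sum_apply, Pi.single_apply]
  rw [heq]
  exact integrable_finset_sum _ (fun i _ => (h i).smul_const _)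

lemma quad_form_bound {n : ℕ} {M : Matrix (Fin n) (Fin n) ℝ} {a : ℝ}
    (hsym : M.IsSymm) (h : ∀ θ : Fin n → ℝ, |θ ⬝ᵥ M.mulVec θ| ≤ a * (θ ⬝ᵥ θ))
    (u v : Fin n → ℝ) :
    u ⬝ᵥ M.mulVec v ≤ a / 2 * (u ⬝ᵥ u + v ⬝ᵥ v) := by
  have hswap : v ⬝ᵥ M.mulVec u = u ⬝ᵥ M.mulVec v := by
    rw [dotProduct_mulVec, ← Matrix.mulVec_transpose, hsym.eq, dotProduct_comm]
  have h1 := (abs_le.1 (h (u + v))).2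
  have h2 := (abs_le.1 (h (u - v))).1
  simp only [Matrix.mulVec_add, Matrix.mulVec_sub, add_dotProduct, sub_dotProduct,
    dotProduct_add, dotProduct_sub] at h1 h2
  have hc := dotProduct_comm u v
  linarith

lemma entry_bound {n : ℕ} {M : Matrix (Fin n) (Fin n) ℝ} {a : ℝ}
    (hsym : M.IsSymm) (h : ∀ θ : Fin n → ℝ, |θ ⬝ᵥ M.mulVec θ| ≤ a * (θ ⬝ᵥ θ))
    (i j : Fin n) : |M i j| ≤ a := by
  have hub := quad_form_bound hsym h (Pi.single i 1) (Pi.single j 1)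
  have hnsym : (-M).IsSymm := by rw [Matrix.IsSymm, Matrix.transpose_neg, hsym.eq]
  have hn : ∀ θ : Fin n → ℝ, |θ ⬝ᵥ (-M).mulVec θ| ≤ a * (θ ⬝ᵥ θ) := by
    intro θ
    rw [Matrix.neg_mulVec, dotProduct_neg, abs_neg]
    exact h θ
  have hlb := quad_form_bound hnsym hn (Pi.single i 1) (Pi.single j 1)
  rw [Matrix.neg_mulVec, dotProduct_neg] at hlb
  simp only [Matrix.mulVec_single, single_dotProduct, mul_one, one_mul, Pi.single_apply] at hub hlb
  norm_num at hub hlb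
  rw [abs_le]
  constructor <;> linarith

end Helpers

theorem conditional_terminal_monotonicity' {n : ℕ} {Ω : Type*}
    {G mΩ : MeasurableSpace Ω} (μ : Measure Ω) [IsProbabilityMeasure μ]
    (hG : G ≤ mΩ)
    (γ a δ : ℝ) (hγ : 0 < γ) (ha : 0 ≤ a) (hδ : δ ∈ Set.Ico (0 : ℝ) 1)
    (h𝔞 : δ * a / (1 - δ) < γ)
    (c 𝔠 : Ω → Matrix (Fin n) (Fin n) ℝ)
    (hc_meas : ∀ i j, Measurable[mΩ] fun ω => c ω i j)
    (hc_bd : ∃ C : ℝ, ∀ ω i j, |c ω i j| ≤ C)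
    (hc_symm : ∀ ω, (c ω).IsSymm)
    (hc_low : ∀ᵐ ω ∂μ, ∀ θ : Fin n → ℝ, γ * (θ ⬝ᵥ θ) ≤ θ ⬝ᵥ (c ω).mulVec θ)
    (h𝔠_meas : ∀ i j, Measurable[G] fun ω => 𝔠 ω i j)
    (h𝔠_psd : ∀ ω, (𝔠 ω).PosSemidef) (h𝔠_symm : ∀ ω, (𝔠 ω).IsSymm)
    (hdist : ∀ᵐ ω ∂μ, ∀ θ : Fin n → ℝ, |θ ⬝ᵥ ((𝔠 ω - c ω).mulVec θ)| ≤ a * (θ ⬝ᵥ θ))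
    (Δx : Ω → (Fin n → ℝ)) (hΔx : MemLp Δx 2 μ) :
    ∀ᵐ ω ∂μ,
      (γ - δ * a / (1 - δ)) * (μ[fun ω' => Δx ω' ⬝ᵥ Δx ω'|G]) ω
        ≤ (μ[fun ω' => ((δ / (1 - δ)) • (μ[fun ω'' => (c ω'').mulVec (Δx ω'')|G]) ω'
              + (c ω').mulVec (Δx ω')) ⬝ᵥ Δx ω'|G]) ω := by
  classical
  have hc_measΩ : ∀ i j, Measurable fun ω => c ω i j :=
    fun i j => hc_meas i j
  haveI : SigmaFinite (μ.trim hG) := inferInstance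
  obtain ⟨C₀, hC₀⟩ := hc_bd
  set C : ℝ := max C₀ 0 with hCdef
  have hC : ∀ ω i j, |c ω i j| ≤ C := fun ω i j => (hC₀ ω i j).trans (le_max_left _ _)
  have hCnn : (0:ℝ) ≤ C := le_max_right _ _
  have hδ0 : (0:ℝ) ≤ δ := hδ.1
  have hδ1 : (0:ℝ) < 1 - δ := by have := hδ.2; linarith
  have hδ' : (0:ℝ) ≤ δ / (1 - δ) := div_nonneg hδ0 hδ1.le
  -- components
  set x : Fin n → Ω → ℝ := fun i ω => Δx ω i with hxdef
  have hx_mem : ∀ i, MemLp (x i) 2 μ := fun i =>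
    (ContinuousLinearMap.proj (R := ℝ) (φ := fun _ : Fin n => ℝ) i).comp_memLp' hΔx
  set q : Ω → ℝ := fun ω => Δx ω ⬝ᵥ Δx ω with hqdef
  have hq_int : Integrable q μ := by
    have h := integrable_finset_sum (μ := μ) (f := fun i ω => x i ω * x i ω) Finset.univ
      (fun i _ => integrable_mul_of_memL2 (hx_mem i) (hx_mem i))
    exact h.congr (by filter_upwards with ω; rfl)
  set F : Ω → Fin n → ℝ := fun ω => (c ω).mulVec (Δx ω) with hFdef
  have hcx : ∀ i j, MemLp (fun ω => c ω i j * x j ω) 2 μ := fun i j => by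
    refine MemLp.of_le_mul (c := C) (hx_mem j)
      (((hc_measΩ i j).aestronglyMeasurable).mul (hx_mem j).1) ?_
    filter_upwards with ω
    rw [Real.norm_eq_abs, Real.norm_eq_abs, abs_mul]
    exact mul_le_mul_of_nonneg_right (hC ω i j) (abs_nonneg _)
  have hFi : ∀ i, MemLp (fun ω => F ω i) 2 μ := fun i => by
    have h := memLp_finset_sum (μ := μ) (f := fun j ω => c ω i j * x j ω) Finset.univ
      (fun j _ => hcx i j)
    exact h.ae_eq (by filter_upwards with ω; rfl)
  have hF_int : Integrable F μ :=
    integrable_pi_of_integrable (fun i => (hFi i).integrable one_le_two)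
  -- entry bounds for 𝔠 - c
  have hdb : ∀ᵐ ω ∂μ, ∀ i j, |𝔠 ω i j - c ω i j| ≤ a := by
    filter_upwards [hdist] with ω hω
    intro i j
    have := entry_bound ((h𝔠_symm ω).sub (hc_symm ω)) hω i j
    simpa [Matrix.sub_apply] using this
  have h𝔠e_meas : ∀ i j, Measurable (fun ω => 𝔠 ω i j) :=
    fun i j => (h𝔠_meas i j).mono hG le_rfl
  have h𝔠mem : ∀ i j, MemLp (fun ω => 𝔠 ω i j) 2 μ := fun i j => by
    refine MemLp.of_le_mul (c := a + C) (memLp_const (1:ℝ)) (h𝔠e_meas i j).aestronglyMeasurable ?_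
    filter_upwards [hdb] with ω hω
    rw [Real.norm_eq_abs, Real.norm_eq_abs, abs_one, mul_one]
    calc |𝔠 ω i j| ≤ |𝔠 ω i j - c ω i j| + |c ω i j| := by
          have := abs_sub_abs_le_abs_sub (𝔠 ω i j) (c ω i j); linarith [abs_nonneg (c ω i j)]
      _ ≤ a + C := add_le_add (hω i j) (hC ω i j)
  -- remainder d = 𝔠 - c components
  set g : Fin n → Ω → ℝ := fun i ω => ((𝔠 ω - c ω).mulVec (Δx ω)) i with hgdef
  have hgx : ∀ i j, MemLp (fun ω => (𝔠 ω i j - c ω i j) * x j ω) 2 μ := fun i j => by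
    refine MemLp.of_le_mul (c := a) (hx_mem j)
      ((((h𝔠e_meas i j).sub (hc_measΩ i j)).aestronglyMeasurable).mul (hx_mem j).1) ?_
    filter_upwards [hdb] with ω hω
    rw [Real.norm_eq_abs, Real.norm_eq_abs, abs_mul]
    exact mul_le_mul_of_nonneg_right (hω i j) (abs_nonneg _)
  have hg_mem : ∀ i, MemLp (g i) 2 μ := fun i => by
    have h := memLp_finset_sum (μ := μ) (f := fun j ω => (𝔠 ω i j - c ω i j) * x j ω)
      Finset.univ (fun j _ => hgx i j)
    refine h.ae_eq ?_
    filter_upwards with ω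
    simp [hxdef, hgdef, Matrix.mulVec, dotProduct, Matrix.sub_apply]
  -- condexp objects
  set Y : Ω → Fin n → ℝ := μ[F|G] with hYdef
  have hY_eq : ∀ i, (fun ω => Y ω i) =ᵐ[μ] μ[fun ω => F ω i|G] :=
    fun i => condexp_pi_apply hG hF_int i
  have hY_mem : ∀ i, MemLp (fun ω => Y ω i) 2 μ := fun i =>
    (memℒp_condexp_two hG (hFi i)).ae_eq (hY_eq i).symm
  have hY_sm : ∀ i, StronglyMeasurable[G] (fun ω => Y ω i) := fun i =>
    (continuous_apply i).comp_stronglyMeasurable stronglyMeasurable_condExp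
  set Z : Fin n → Ω → ℝ := fun i => μ[x i|G] with hZdef
  have hZ_mem : ∀ i, MemLp (Z i) 2 μ := fun i => memℒp_condexp_two hG (hx_mem i)
  have hZ_sm : ∀ i, StronglyMeasurable[G] (Z i) := fun i => stronglyMeasurable_condExp
  -- pull-out helper
  have hpull : ∀ (f g : Ω → ℝ), StronglyMeasurable[G] f → MemLp f 2 μ → MemLp g 2 μ →
      μ[fun ω => f ω * g ω|G] =ᵐ[μ] fun ω => f ω * (μ[g|G]) ω := fun f g hfm hf2 hg2 =>
    condExp_mul_of_stronglyMeasurable_left hfm (integrable_mul_of_memL2 hf2 hg2)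
      (hg2.integrable one_le_two)
  have hsum_pull : ∀ (A B : Fin n → Ω → ℝ),
      (∀ j, StronglyMeasurable[G] (A j)) → (∀ j, MemLp (A j) 2 μ) →
      (∀ j, MemLp (B j) 2 μ) →
      μ[fun ω => ∑ j, A j ω * B j ω|G] =ᵐ[μ] fun ω => ∑ j, A j ω * (μ[B j|G]) ω := by
    intro A B hsm hA hB
    have h1 : (fun ω => ∑ j, A j ω * B j ω) = ∑ j : Fin n, fun ω => A j ω * B j ω := by
      funext ω; rw [Finset.sum_apply]
    rw [h1]
    refine (condExp_finset_sum (fun j _ => integrable_mul_of_memL2 (hA j) (hB j)) G).trans ?_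
    have h2 : ∀ j : Fin n, μ[fun ω => A j ω * B j ω|G] =ᵐ[μ]
        fun ω => A j ω * (μ[B j|G]) ω := fun j => hpull (A j) (B j) (hsm j) (hA j) (hB j)
    filter_upwards [ae_all_iff.2 h2] with ω hω
    rw [Finset.sum_apply]
    exact Finset.sum_congr rfl fun j _ => hω j
  -- conditional Jensen componentwise
  have hJen : ∀ i, ∀ᵐ ω ∂μ, Z i ω * Z i ω ≤ (μ[fun ω => x i ω * x i ω|G]) ω := by
    intro i
    have e1 : μ[fun ω => Z i ω * x i ω|G] =ᵐ[μ] fun ω => Z i ω * Z i ω :=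
      hpull (Z i) (x i) (hZ_sm i) (hZ_mem i) (hx_mem i)
    have e2 : μ[fun ω => Z i ω * Z i ω|G] =ᵐ[μ] fun ω => Z i ω * Z i ω := by
      have h := condExp_of_stronglyMeasurable hG ((hZ_sm i).mul (hZ_sm i))
        (integrable_mul_of_memL2 (hZ_mem i) (hZ_mem i))
      exact Filter.Eventually.of_forall fun ω => congrFun h ω
    have e0 : (0:Ω → ℝ) ≤ᵐ[μ] μ[fun ω => (x i ω - Z i ω) * (x i ω - Z i ω)|G] :=
      condExp_nonneg (Filter.Eventually.of_forall fun ω => mul_self_nonneg _)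
    have hfe : (fun ω => (x i ω - Z i ω) * (x i ω - Z i ω))
        = (fun ω => x i ω * x i ω - (2:ℝ) * (Z i ω * x i ω)) + fun ω => Z i ω * Z i ω := by
      funext ω; simp only [Pi.add_apply]; ring
    have hxx_int : Integrable (fun ω => x i ω * x i ω) μ :=
      integrable_mul_of_memL2 (hx_mem i) (hx_mem i)
    have hzx_int : Integrable (fun ω => (2:ℝ) * (Z i ω * x i ω)) μ :=
      (integrable_mul_of_memL2 (hZ_mem i) (hx_mem i)).const_mul 2
    have e3 : μ[fun ω => (x i ω - Z i ω) * (x i ω - Z i ω)|G] =ᵐ[μ]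
        μ[fun ω => x i ω * x i ω - (2:ℝ) * (Z i ω * x i ω)|G]
          + μ[fun ω => Z i ω * Z i ω|G] := by
      rw [hfe]
      exact condExp_add (hxx_int.sub hzx_int)
        (integrable_mul_of_memL2 (hZ_mem i) (hZ_mem i)) G
    have e4 : μ[fun ω => x i ω * x i ω - (2:ℝ) * (Z i ω * x i ω)|G] =ᵐ[μ]
        μ[fun ω => x i ω * x i ω|G] - μ[fun ω => (2:ℝ) * (Z i ω * x i ω)|G] :=
      condExp_sub hxx_int hzx_int G
    have e5 : μ[fun ω => (2:ℝ) * (Z i ω * x i ω)|G] =ᵐ[μ]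
        fun ω => (2:ℝ) * (μ[fun ω' => Z i ω' * x i ω'|G]) ω := by
      have := condExp_smul (m := G) (μ := μ) (2:ℝ) (fun ω => Z i ω * x i ω)
      filter_upwards [this] with ω hω
      exact hω
    filter_upwards [e0, e3, e4, e5, e1, e2] with ω h0 h3 h4 h5 h1' h2'
    have h3' := h3
    rw [Pi.add_apply] at h3'
    rw [h3', h2'] at h0
    rw [Pi.sub_apply] at h4
    rw [h4] at h0
    rw [h5, h1'] at h0
    simp only [Pi.zero_apply] at h0
    linarith
  have hqce : μ[q|G] =ᵐ[μ] fun ω => ∑ i, (μ[fun ω' => x i ω' * x i ω'|G]) ω := by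
    have h1 : q = ∑ i : Fin n, fun ω => x i ω * x i ω := by
      funext ω; rw [Finset.sum_apply]; rfl
    rw [h1]
    refine (condExp_finset_sum
      (fun i _ => integrable_mul_of_memL2 (hx_mem i) (hx_mem i)) G).trans ?_
    filter_upwards with ω
    rw [Finset.sum_apply]
  have hJq : ∀ᵐ ω ∂μ, ∑ i, Z i ω * Z i ω ≤ (μ[q|G]) ω := by
    filter_upwards [ae_all_iff.2 hJen, hqce] with ω hω hqω
    rw [hqω]
    exact Finset.sum_le_sum fun i _ => hω i
  -- key1 : decomposition of μ[F i |G]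
  have key1 : ∀ i, μ[fun ω => F ω i|G] =ᵐ[μ]
      fun ω => (∑ j, 𝔠 ω i j * Z j ω) - (μ[g i|G]) ω := by
    intro i
    have hFeq : (fun ω => F ω i)
        = (fun ω => ∑ j, 𝔠 ω i j * x j ω) - fun ω => g i ω := by
      funext ω
      simp only [Pi.sub_apply, hFdef, hgdef, Matrix.mulVec, dotProduct,
        Matrix.sub_apply, ← Finset.sum_sub_distrib]
      exact Finset.sum_congr rfl fun j _ => by ring
    rw [hFeq]
    have h𝔠sum_int : Integrable (fun ω => ∑ j, 𝔠 ω i j * x j ω) μ := by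
      have h := integrable_finset_sum (μ := μ) (f := fun j ω => 𝔠 ω i j * x j ω) Finset.univ
        (fun j _ => integrable_mul_of_memL2 (h𝔠mem i j) (hx_mem j))
      exact h.congr (by filter_upwards with ω; rfl)
    refine (condExp_sub h𝔠sum_int ((hg_mem i).integrable one_le_two) G).trans ?_
    have h2 := hsum_pull (fun j ω => 𝔠 ω i j) x
      (fun j => (h𝔠_meas i j).stronglyMeasurable) (fun j => h𝔠mem i j) hx_mem
    filter_upwards [h2] with ω hω
    rw [Pi.sub_apply, hω]
  -- key2 : the cross-term bound
  have key2 : ∀ᵐ ω ∂μ, ∑ i, Z i ω * (μ[g i|G]) ω ≤ a * (μ[q|G]) ω := by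
    have e1 := hsum_pull Z g hZ_sm hZ_mem hg_mem
    have hZg_int : Integrable (fun ω => ∑ i, Z i ω * g i ω) μ := by
      have h := integrable_finset_sum (μ := μ) (f := fun i ω => Z i ω * g i ω) Finset.univ
        (fun i _ => integrable_mul_of_memL2 (hZ_mem i) (hg_mem i))
      exact h.congr (by filter_upwards with ω; rfl)
    have hZZ_int : Integrable (fun ω => ∑ i, Z i ω * Z i ω) μ := by
      have h := integrable_finset_sum (μ := μ) (f := fun i ω => Z i ω * Z i ω) Finset.univ
        (fun i _ => integrable_mul_of_memL2 (hZ_mem i) (hZ_mem i))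
      exact h.congr (by filter_upwards with ω; rfl)
    have hptw : ∀ᵐ ω ∂μ, ∑ i, Z i ω * g i ω
        ≤ a / 2 * ((∑ i, Z i ω * Z i ω) + q ω) := by
      filter_upwards [hdist] with ω hω
      have := quad_form_bound ((h𝔠_symm ω).sub (hc_symm ω)) hω (fun i => Z i ω) (Δx ω)
      exact this
    have hint : Integrable (fun ω => a / 2 * ((∑ i, Z i ω * Z i ω) + q ω)) μ := by
      have h := (hZZ_int.add hq_int).const_mul (a / 2)
      exact h.congr (by filter_upwards with ω; rfl)
    have hmono := condExp_mono (m := G) hZg_int hint hptw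
    have hrhs : μ[fun ω => a / 2 * ((∑ i, Z i ω * Z i ω) + q ω)|G] =ᵐ[μ]
        fun ω => a / 2 * ((∑ i, Z i ω * Z i ω) + (μ[q|G]) ω) := by
      have e6 : μ[fun ω => (∑ i, Z i ω * Z i ω) + q ω|G] =ᵐ[μ]
          μ[fun ω => ∑ i, Z i ω * Z i ω|G] + μ[q|G] :=
        condExp_add hZZ_int hq_int G
      have e7 : μ[fun ω => ∑ i, Z i ω * Z i ω|G] =ᵐ[μ] fun ω => ∑ i, Z i ω * Z i ω := by
        have h := condExp_of_stronglyMeasurable hG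
          (Finset.stronglyMeasurable_fun_sum Finset.univ fun i _ => (hZ_sm i).mul (hZ_sm i))
          hZZ_int
        exact Filter.Eventually.of_forall fun ω => congrFun h ω
      have e8 := condExp_smul (m := G) (μ := μ) (a / 2)
        (fun ω => (∑ i, Z i ω * Z i ω) + q ω)
      filter_upwards [e6, e7, e8] with ω h6 h7 h8
      have h8' : (μ[fun ω => a / 2 * ((∑ i, Z i ω * Z i ω) + q ω)|G]) ω
          = a / 2 * (μ[fun ω => (∑ i, Z i ω * Z i ω) + q ω|G]) ω := by
        exact h8
      rw [h8', h6, Pi.add_apply, h7]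
    filter_upwards [e1, hmono, hrhs, hJq] with ω h1 h2 h3 h4
    rw [← h1]
    calc (μ[fun ω => ∑ i, Z i ω * g i ω|G]) ω
        ≤ (μ[fun ω => a / 2 * ((∑ i, Z i ω * Z i ω) + q ω)|G]) ω := h2
      _ = a / 2 * ((∑ i, Z i ω * Z i ω) + (μ[q|G]) ω) := by rw [h3]
      _ ≤ a / 2 * ((μ[q|G]) ω + (μ[q|G]) ω) := by
          apply mul_le_mul_of_nonneg_left _ (by linarith)
          linarith
      _ = a * (μ[q|G]) ω := by ring
  -- key3 : lower bound from coercivity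
  have hFx_int : Integrable (fun ω => F ω ⬝ᵥ Δx ω) μ := by
    have h := integrable_finset_sum (μ := μ) (f := fun i ω => F ω i * x i ω) Finset.univ
      (fun i _ => integrable_mul_of_memL2 (hFi i) (hx_mem i))
    exact h.congr (by filter_upwards with ω; rfl)
  have key3 : ∀ᵐ ω ∂μ, γ * (μ[q|G]) ω ≤ (μ[fun ω => F ω ⬝ᵥ Δx ω|G]) ω := by
    have hptw : ∀ᵐ ω ∂μ, γ * q ω ≤ F ω ⬝ᵥ Δx ω := by
      filter_upwards [hc_low] with ω hω
      rw [hFdef, dotProduct_comm]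
      exact hω (Δx ω)
    have hγq_int : Integrable (fun ω => γ * q ω) μ := by
      have h := hq_int.const_mul γ
      exact h.congr (by filter_upwards with ω; rfl)
    have hmono := condExp_mono (m := G) hγq_int hFx_int hptw
    have hs := condExp_smul (m := G) (μ := μ) γ q
    filter_upwards [hmono, hs] with ω h1 h2
    have h2' : (μ[fun ω => γ * q ω|G]) ω = γ * (μ[q|G]) ω := by exact h2
    rw [← h2']
    exact h1
  -- decomposition of the goal condexp
  have hYx_int : Integrable (fun ω => Y ω ⬝ᵥ Δx ω) μ := by
    have h := integrable_finset_sum (μ := μ) (f := fun i ω => Y ω i * x i ω) Finset.univ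
      (fun i _ => integrable_mul_of_memL2 (hY_mem i) (hx_mem i))
    exact h.congr (by filter_upwards with ω; rfl)
  have hinner : (fun ω' => ((δ / (1 - δ)) • Y ω' + (c ω').mulVec (Δx ω')) ⬝ᵥ Δx ω')
      = (fun ω => (δ / (1 - δ)) * (Y ω ⬝ᵥ Δx ω)) + fun ω => F ω ⬝ᵥ Δx ω := by
    funext ω
    rw [Pi.add_apply, add_dotProduct, smul_dotProduct, smul_eq_mul, hFdef]
  have hdecomp : μ[fun ω' => ((δ / (1 - δ)) • Y ω' + (c ω').mulVec (Δx ω')) ⬝ᵥ Δx ω'|G]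
      =ᵐ[μ] fun ω => (δ / (1 - δ)) * (μ[fun ω' => Y ω' ⬝ᵥ Δx ω'|G]) ω
        + (μ[fun ω' => F ω' ⬝ᵥ Δx ω'|G]) ω := by
    rw [hinner]
    refine (condExp_add (hYx_int.const_mul _) hFx_int G).trans ?_
    have hs := condExp_smul (m := G) (μ := μ) (δ / (1 - δ)) (fun ω => Y ω ⬝ᵥ Δx ω)
    filter_upwards [hs] with ω h1
    rw [Pi.add_apply]
    have h1' : (μ[fun ω => (δ / (1 - δ)) * (Y ω ⬝ᵥ Δx ω)|G]) ω
        = (δ / (1 - δ)) * (μ[fun ω => Y ω ⬝ᵥ Δx ω|G]) ω := by exact h1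
    rw [h1']
  have hYx : μ[fun ω' => Y ω' ⬝ᵥ Δx ω'|G] =ᵐ[μ] fun ω => ∑ i, Y ω i * Z i ω :=
    hsum_pull (fun i ω => Y ω i) x hY_sm hY_mem hx_mem
  -- positivity of the 𝔠 quadratic form
  have hpsd : ∀ ω, 0 ≤ ∑ i, (∑ j, 𝔠 ω i j * Z j ω) * Z i ω := by
    intro ω
    have h := (h𝔠_psd ω).dotProduct_mulVec_nonneg (fun i => Z i ω)
    have h' : (0:ℝ) ≤ (fun i => Z i ω) ⬝ᵥ (𝔠 ω).mulVec (fun i => Z i ω) := by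
      simpa using h
    calc (0:ℝ) ≤ (fun i => Z i ω) ⬝ᵥ (𝔠 ω).mulVec (fun i => Z i ω) := h'
      _ = ∑ i, (∑ j, 𝔠 ω i j * Z j ω) * Z i ω := by
          simp only [dotProduct, Matrix.mulVec]
          exact Finset.sum_congr rfl fun i _ => by rw [mul_comm]
  -- final assembly
  have hYall : ∀ᵐ ω ∂μ, ∀ i, Y ω i = (∑ j, 𝔠 ω i j * Z j ω) - (μ[g i|G]) ω :=
    ae_all_iff.2 fun i => ((hY_eq i).trans (key1 i))
  filter_upwards [hdecomp, hYx, hYall, key2, key3] with ω h1 h2 h3 h4 h5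
  rw [h1, h2]
  have hS : ∑ i, Y ω i * Z i ω
      = (∑ i, (∑ j, 𝔠 ω i j * Z j ω) * Z i ω) - ∑ i, Z i ω * (μ[g i|G]) ω := by
    rw [← Finset.sum_sub_distrib]
    refine Finset.sum_congr rfl fun i _ => ?_
    rw [h3 i]; ring
  have hpos := hpsd ω
  have hmul : δ / (1 - δ) * (∑ i, Y ω i * Z i ω)
      ≥ δ / (1 - δ) * (0 - a * (μ[q|G]) ω) := by
    apply mul_le_mul_of_nonneg_left _ hδ'
    rw [hS]; linarith
  have h𝔞eq : δ * a / (1 - δ) = δ / (1 - δ) * a := by ring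
  rw [h𝔞eq]
  nlinarith [hmul, h5]


/-- Conditional terminal monotonicity estimate: if `c ⪰ γ I` a.s. and bounded, `𝔠` is a
`G`-measurable positive semidefinite symmetric random matrix with
`‖𝔠 − c‖_∞ ≤ a` (operator-norm bound, expressed through the quadratic form since the
matrices are symmetric), and `𝔞 := δa/(1−δ) < γ`, then almost surely
`E[⟨(δ/(1−δ))E[cΔx|G] + cΔx, Δx⟩ | G] ≥ (γ − 𝔞)E[|Δx|²|G]`. -/
theorem conditional_terminal_monotonicity {n : ℕ} {Ω : Type*}
    (G : MeasurableSpace Ω) {mΩ : MeasurableSpace Ω} (μ : Measure Ω) [IsProbabilityMeasure μ]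
    (hG : G ≤ mΩ)
    (γ a δ : ℝ) (hγ : 0 < γ) (ha : 0 ≤ a) (hδ : δ ∈ Set.Ico (0 : ℝ) 1)
    (h𝔞 : δ * a / (1 - δ) < γ)
    (c 𝔠 : Ω → Matrix (Fin n) (Fin n) ℝ)
    (hc_meas : ∀ i j, Measurable fun ω => c ω i j)
    (hc_bd : ∃ C : ℝ, ∀ ω i j, |c ω i j| ≤ C)
    (hc_symm : ∀ ω, (c ω).IsSymm)
    (hc_low : ∀ᵐ ω ∂μ, ∀ θ : Fin n → ℝ, γ * (θ ⬝ᵥ θ) ≤ θ ⬝ᵥ (c ω).mulVec θ)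
    (h𝔠_meas : ∀ i j, Measurable[G] fun ω => 𝔠 ω i j)
    (h𝔠_psd : ∀ ω, (𝔠 ω).PosSemidef) (h𝔠_symm : ∀ ω, (𝔠 ω).IsSymm)
    (hdist : ∀ᵐ ω ∂μ, ∀ θ : Fin n → ℝ, |θ ⬝ᵥ ((𝔠 ω - c ω).mulVec θ)| ≤ a * (θ ⬝ᵥ θ))
    (Δx : Ω → (Fin n → ℝ)) (hΔx : MemLp Δx 2 μ) :
    ∀ᵐ ω ∂μ,
      (γ - δ * a / (1 - δ)) * (μ[fun ω' => Δx ω' ⬝ᵥ Δx ω'|G]) ω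
        ≤ (μ[fun ω' => ((δ / (1 - δ)) • (μ[fun ω'' => (c ω'').mulVec (Δx ω'')|G]) ω'
              + (c ω').mulVec (Δx ω')) ⬝ᵥ Δx ω'|G]) ω :=
  conditional_terminal_monotonicity' μ hG γ a δ hγ ha hδ h𝔞 c 𝔠 hc_meas hc_bd hc_symm
    hc_low h𝔠_meas h𝔠_psd h𝔠_symm hdist Δx hΔx
end
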